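/- Let D be a minimally rich domain that is connected with two distinct neighbours, and f: D^2 → A a unanimous, tops-only, locally strategy-proof scf. For every edge (a,b) of G(D), either voter 1 is decisive over a or voter 2 is decisive over b. -/
import Mathlib


open Relation

/-- A preference is a ranking: a bijection from alternatives to ranks (0 = best). -/
abbrev Pref (A : Type*) [Fintype A] := A ≃ Fin (Fintype.card A)

namespace Pref

variable {A : Type*} [Fintype A]

/-- The rank (as a natural number, 0 = best) of alternative `a` in preference `P`. -/
def rk (P : Pref A) (a : A) : ℕ := (P a : ℕ)

/-- The top-ranked alternative of `P`. -/
noncomputable def top [Nonempty A] (P : Pref A) : A := P.symm ⟨0, Fintype.card_pos⟩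

/-- `a` is strictly preferred to `b` under `P`. -/
def SPrefers (P : Pref A) (a b : A) : Prop := rk P a < rk P b

/-- Two preferences are adjacent if they differ by one swap of consecutively
ranked alternatives. -/
def Adjacent (P P' : Pref A) : Prop :=
  ∃ a b : A, rk P a = rk P b + 1 ∧ rk P' a = rk P b ∧ rk P' b = rk P a ∧
    ∀ c : A, c ≠ a → c ≠ b → rk P c = rk P' c

end Pref

open Pref

variable {A : Type*} [Fintype A] [Nonempty A]

/-- One step between members of the domain `D` along adjacent preferences. -/
def StepRel (D : Set (Pref A)) (P Q : Pref A) : Prop := P ∈ D ∧ Q ∈ D ∧ Adjacent P Q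

/-- The domain `D` is connected: any two members are joined by a path of
adjacent preferences inside `D`. -/
def DConnected (D : Set (Pref A)) : Prop :=
  ∀ P ∈ D, ∀ Q ∈ D, ReflTransGen (StepRel D) P Q

/-- One step inside `D` along adjacent preferences keeping the same top. -/
def TStepRel (D : Set (Pref A)) (P Q : Pref A) : Prop :=
  StepRel D P Q ∧ Pref.top P = Pref.top Q

/-- The top-connected closure of `P` in `D`. -/
def TCC (D : Set (Pref A)) (P : Pref A) : Set (Pref A) :=
  {Q | ReflTransGen (TStepRel D) P Q}

/-- Neighbours of a subset `S` inside the domain `D`. -/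
def Nbr (D S : Set (Pref A)) : Set (Pref A) :=
  {Q | Q ∈ D ∧ Q ∉ S ∧ ∃ P ∈ S, Adjacent P Q}

/-- `D` is connected with two distinct neighbours. -/
def CDN (D : Set (Pref A)) : Prop :=
  DConnected D ∧
    ∀ P ∈ D, ∃ Q ∈ Nbr D (TCC D P), ∃ R ∈ Nbr D (TCC D P), Pref.top Q ≠ Pref.top R

/-- Every alternative is top-ranked in some preference of `D`. -/
def MinimallyRich (D : Set (Pref A)) : Prop := ∀ a : A, ∃ P ∈ D, Pref.top P = a

/-- The edge relation of the induced graph `G(D)` on alternatives. -/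
def EdgeD (D : Set (Pref A)) (a b : A) : Prop :=
  ∃ P ∈ D, ∃ P' ∈ D, Adjacent P P' ∧
    Pref.top P = a ∧ Pref.top P' = b ∧ rk P b = 1 ∧ rk P' a = 1

/-- `v 0, v 1, …, v (k-1)` is a path in the induced graph `G(D)`. -/
def IsPathD (D : Set (Pref A)) (k : ℕ) (v : ℕ → A) : Prop :=
  (∀ i j, i < k → j < k → v i = v j → i = j) ∧
    ∀ i, i + 1 < k → EdgeD D (v i) (v (i + 1))

/-- Connected component of `P` in `D`. -/
def Component (D : Set (Pref A)) (P : Pref A) : Set (Pref A) :=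
  {Q | Q ∈ D ∧ ReflTransGen (StepRel D) P Q}

section SCF

variable {n : ℕ} (D : Set (Pref A))

/-- Unanimity. -/
def Unanimous (f : (Fin n → D) → A) : Prop :=
  ∀ (P : Fin n → D) (a : A), (∀ i, Pref.top (P i : Pref A) = a) → f P = a

/-- Local strategy-proofness. -/
def LocallySP (f : (Fin n → D) → A) : Prop :=
  ∀ (P : Fin n → D) (i : Fin n) (Q : D), Adjacent (P i : Pref A) (Q : Pref A) →
    ¬ SPrefers (P i : Pref A) (f (Function.update P i Q)) (f P)

/-- (Global) strategy-proofness. -/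
def StrategyProof (f : (Fin n → D) → A) : Prop :=
  ∀ (P : Fin n → D) (i : Fin n) (Q : D),
    ¬ SPrefers (P i : Pref A) (f (Function.update P i Q)) (f P)

/-- Tops-onlyness. -/
def TopsOnly (f : (Fin n → D) → A) : Prop :=
  ∀ P P' : Fin n → D,
    (∀ i, Pref.top (P i : Pref A) = Pref.top (P' i : Pref A)) → f P = f P'

/-- Dictatorship. -/
def Dictatorial (f : (Fin n → D) → A) : Prop :=
  ∃ i : Fin n, ∀ P : Fin n → D, f P = Pref.top (P i : Pref A)

/-- Voter `i` is decisive over `a`. -/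
def Decisive (f : (Fin n → D) → A) (i : Fin n) (a : A) : Prop :=
  ∀ P : Fin n → D, Pref.top (P i : Pref A) = a → f P = a

end SCF

-- ===================== auxiliary development =====================

section AuxRank

lemma rkInj (P : Pref A) {y z : A} (h : rk P y = rk P z) : y = z :=
  P.injective (Fin.ext h)

lemma rkTop (P : Pref A) : rk P (Pref.top P) = 0 := by
  simp [Pref.rk, Pref.top]

lemma adjSymm {P Q : Pref A} (h : Adjacent P Q) : Adjacent Q P := by
  obtain ⟨a, b, e1, e2, e3, e4⟩ := h
  exact ⟨b, a, by omega, by omega, by omega, fun c hcb hca => (e4 c hca hcb).symm⟩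

lemma edgeData {P P' : Pref A} {t u : A} (hadj : Adjacent P P')
    (htP : Pref.top P = t) (htP' : Pref.top P' = u)
    (h1 : rk P u = 1) (h1' : rk P' t = 1) :
    rk P t = 0 ∧ rk P' u = 0 ∧ ∀ z, z ≠ t → z ≠ u → rk P z = rk P' z := by
  have h0 : rk P t = 0 := by rw [← htP]; exact rkTop P
  have h0' : rk P' u = 0 := by rw [← htP']; exact rkTop P'
  obtain ⟨c, d, e1, e2, e3, e4⟩ := hadj
  have hct : c ≠ t := by intro h; rw [h] at e1; omega
  have hcd : c = u ∧ d = t := by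
    rcases eq_or_ne c u with hc | hc
    · have hd0 : rk P d = 0 := by rw [hc] at e1; omega
      exact ⟨hc, rkInj P (hd0.trans h0.symm)⟩
    · rcases eq_or_ne d t with hd | hd
      · have hc1 : rk P c = 1 := by rw [hd] at e1; omega
        exact ⟨rkInj P (hc1.trans h1.symm), hd⟩
      · exfalso
        have := e4 t (Ne.symm hct) (Ne.symm hd)
        omega
  refine ⟨h0, h0', fun z hzt hzu => e4 z ?_ ?_⟩
  · rw [hcd.1]; exact hzu
  · rw [hcd.2]; exact hzt

lemma edgeOfAdj {D : Set (Pref A)} {P Q : Pref A}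
    (hP : P ∈ D) (hQ : Q ∈ D) (hadj : Adjacent P Q)
    (hne : Pref.top P ≠ Pref.top Q) :
    EdgeD D (Pref.top P) (Pref.top Q) := by
  have h0 : rk P (Pref.top P) = 0 := rkTop P
  have h0' : rk Q (Pref.top Q) = 0 := rkTop Q
  obtain ⟨c, d, e1, e2, e3, e4⟩ := id hadj
  have ht1c : Pref.top P ≠ c := by intro h; rw [← h] at e1; omega
  have ht1d : Pref.top P = d := by
    by_contra hnd
    have h4 := e4 (Pref.top P) ht1c hnd
    have h5 : rk Q (Pref.top P) = rk Q (Pref.top Q) := by omega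
    exact hne (rkInj Q h5)
  have ht2c : Pref.top Q = c := by
    by_contra hnc
    have hnd : Pref.top Q ≠ d := fun h => hne (ht1d.trans h.symm)
    have h4 := e4 (Pref.top Q) hnc hnd
    have h5 : rk P (Pref.top Q) = rk P (Pref.top P) := by omega
    exact hne (rkInj P h5).symm
  have hd0 : rk P d = 0 := by rw [← ht1d]; exact h0
  have hA1 : rk P (Pref.top Q) = 1 := by rw [ht2c]; omega
  have hA2 : rk Q (Pref.top P) = 1 := by rw [ht1d]; omega
  exact ⟨P, hP, Q, hQ, hadj, rfl, rfl, hA1, hA2⟩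

lemma rankCore {P P' : Pref A} {t u h h' : A}
    (h0 : rk P t = 0) (h1 : rk P u = 1) (h0' : rk P' u = 0) (h1' : rk P' t = 1)
    (hoff : ∀ z, z ≠ t → z ≠ u → rk P z = rk P' z)
    (i1 : rk P h ≤ rk P h') (i2 : rk P' h' ≤ rk P' h) (hne : h ≠ h') :
    h = t ∧ h' = u := by
  by_cases hht : h = t
  · subst hht
    refine ⟨rfl, ?_⟩
    by_cases hh'u : h' = u
    · exact hh'u
    · exfalso
      have hh't : h' ≠ h := Ne.symm hne
      have heq : rk P h' = rk P' h' := hoff h' hh't hh'u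
      have n0 : rk P h' ≠ 0 := fun hz => hh't (rkInj P (hz.trans h0.symm))
      have n1 : rk P h' ≠ 1 := fun hz => hh'u (rkInj P (hz.trans h1.symm))
      omega
  · by_cases hhu : h = u
    · subst hhu
      have hz : rk P' h' = 0 := by omega
      exact absurd (rkInj P' (hz.trans h0'.symm)) (Ne.symm hne)
    · have heq : rk P h = rk P' h := hoff h hht hhu
      have n0 : rk P h ≠ 0 := fun hz => hht (rkInj P (hz.trans h0.symm))
      have n1 : rk P h ≠ 1 := fun hz => hhu (rkInj P (hz.trans h1.symm))
      by_cases hh't : h' = t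
      · subst hh't; omega
      · by_cases hh'u : h' = u
        · subst hh'u; omega
        · have heq' : rk P h' = rk P' h' := hoff h' hh't hh'u
          have hz : rk P h = rk P h' := by omega
          exact absurd (rkInj P hz) hne

lemma edgeIrrefl {D : Set (Pref A)} {t : A} (h : EdgeD D t t) : False := by
  obtain ⟨P, _, P', _, _, htP, _, h1, _⟩ := h
  rw [← htP] at h1
  have := rkTop P
  omega

lemma edgeSymm {D : Set (Pref A)} {t u : A} (h : EdgeD D t u) : EdgeD D u t := by
  obtain ⟨P, hP, P', hP', hadj, htP, htP', h1, h1'⟩ := h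
  exact ⟨P', hP', P, hP, adjSymm hadj, htP', htP, h1', h1⟩

lemma tccMem {D : Set (Pref A)} {P Q : Pref A} (hP : P ∈ D) (h : Q ∈ TCC D P) : Q ∈ D := by
  induction h with
  | refl => exact hP
  | tail _ hstep _ => exact hstep.1.2.1

lemma tccTop {D : Set (Pref A)} {P Q : Pref A} (h : Q ∈ TCC D P) :
    Pref.top Q = Pref.top P := by
  induction h with
  | refl => rfl
  | tail _ hstep ih => rw [← hstep.2]; exact ih

lemma minDeg2 {D : Set (Pref A)} (hmr : MinimallyRich D) (hcdn : CDN D) (t : A) :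
    ∃ u v, EdgeD D t u ∧ EdgeD D t v ∧ u ≠ v := by
  obtain ⟨P, hP, htP⟩ := hmr t
  obtain ⟨Q, hQn, R, hRn, hQR⟩ := hcdn.2 P hP
  obtain ⟨hQD, hQt, P₁, hP₁, hadj₁⟩ := hQn
  obtain ⟨hRD, hRt, P₂, hP₂, hadj₂⟩ := hRn
  have hP₁D : P₁ ∈ D := tccMem hP hP₁
  have hP₂D : P₂ ∈ D := tccMem hP hP₂
  have htP₁ : Pref.top P₁ = t := by rw [tccTop hP₁, htP]
  have htP₂ : Pref.top P₂ = t := by rw [tccTop hP₂, htP]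
  have hQne : Pref.top P₁ ≠ Pref.top Q := by
    intro h
    exact hQt (Relation.ReflTransGen.tail hP₁ ⟨⟨hP₁D, hQD, hadj₁⟩, h⟩)
  have hRne : Pref.top P₂ ≠ Pref.top R := by
    intro h
    exact hRt (Relation.ReflTransGen.tail hP₂ ⟨⟨hP₂D, hRD, hadj₂⟩, h⟩)
  refine ⟨Pref.top Q, Pref.top R, ?_, ?_, hQR⟩
  · have := edgeOfAdj hP₁D hQD hadj₁ hQne
    rwa [htP₁] at this
  · have := edgeOfAdj hP₂D hRD hadj₂ hRne
    rwa [htP₂] at this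

lemma topsReach {D : Set (Pref A)} {P Q : Pref A} (h : ReflTransGen (StepRel D) P Q) :
    ReflTransGen (EdgeD D) (Pref.top P) (Pref.top Q) := by
  induction h with
  | refl => exact .refl
  | @tail p q _ hstep ih =>
    rcases eq_or_ne (Pref.top p) (Pref.top q) with he | hne
    · rw [← he]; exact ih
    · exact ih.tail (edgeOfAdj hstep.1 hstep.2.1 hstep.2.2 hne)

lemma edgeConn {D : Set (Pref A)} (hmr : MinimallyRich D) (hdc : DConnected D) (x y : A) :
    ReflTransGen (EdgeD D) x y := by
  obtain ⟨P, hP, htP⟩ := hmr x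
  obtain ⟨Q, hQ, htQ⟩ := hmr y
  have := topsReach (hdc P hP Q hQ)
  rwa [htP, htQ] at this

end AuxRank

-- ===================== abstract combinatorial part =====================

section AuxAbstract

structure GSetup (E : A → A → Prop) (g : A → A → A) : Prop where
  symm : ∀ x y, E x y → E y x
  irr : ∀ x, ¬ E x x
  deg2 : ∀ t, ∃ u v, E t u ∧ E t v ∧ u ≠ v
  diag : ∀ x, g x x = x
  core1 : ∀ t u y, E t u → g t y ≠ g u y → g t y = t ∧ g u y = u
  core2 : ∀ t u x, E t u → g x t ≠ g x u → g x t = t ∧ g x u = u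

def RavRel (E : A → A → Prop) (v : A) (p q : A) : Prop := E p q ∧ p ≠ v ∧ q ≠ v

lemma rtgRev {α : Type*} {r : α → α → Prop} (hs : ∀ x y, r x y → r y x) {s t : α}
    (h : ReflTransGen r s t) : ReflTransGen r t s := by
  induction h with
  | refl => exact .refl
  | tail _ hstep ih => exact Relation.ReflTransGen.head (hs _ _ hstep) ih

variable {E : A → A → Prop} {g : A → A → A}

lemma roamTwo (S : GSetup E g) {v x s s' : A} (h : ReflTransGen (RavRel E v) s s')
    (hg : g x s = v) : g x s' = v := by
  induction h with
  | refl => exact hg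
  | @tail p q _ hstep ih =>
    rcases eq_or_ne (g x p) (g x q) with he | hne
    · rw [← he]; exact ih
    · exfalso
      have hp := (S.core2 p q x hstep.1 hne).1
      exact hstep.2.1 (by rw [← hp, ih])

lemma roamOne (S : GSetup E g) {v y s s' : A} (h : ReflTransGen (RavRel E v) s s')
    (hg : g s y = v) : g s' y = v := by
  induction h with
  | refl => exact hg
  | @tail p q _ hstep ih =>
    rcases eq_or_ne (g p y) (g q y) with he | hne
    · rw [← he]; exact ih
    · exfalso
      have hp := (S.core1 p q y hstep.1 hne).1
      exact hstep.2.1 (by rw [← hp, ih])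

theorem lemZ (S : GSetup E g) :
    ∀ n : ℕ, ∀ H : Finset A, H.card ≤ n → ∀ α β : A, α ∈ H → β ∈ H → β ≠ α → E α β →
      (∀ t ∈ H, t ≠ α → ∀ z, E t z → z ∈ H) →
      (∀ t ∈ H, g t α = α ∧ g α t = α) → False := by
  intro n
  induction n with
  | zero =>
    intro H hcard α β hα _ _ _ _ _
    have hH : H = ∅ := Finset.card_eq_zero.mp (Nat.le_zero.mp hcard)
    rw [hH] at hα
    exact absurd hα (Finset.notMem_empty α)
  | succ n ih =>
    intro H hcard α β hα hβ hβα hEαβ hclose hrc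
    classical
    have hβC : ReflTransGen (RavRel E α) β β := .refl
    have hCsub : ∀ y, ReflTransGen (RavRel E α) β y → y ∈ H ∧ y ≠ α := by
      intro y hy
      induction hy with
      | refl => exact ⟨hβ, hβα⟩
      | @tail p q _ hstep ihp => exact ⟨hclose p ihp.1 ihp.2 q hstep.1, hstep.2.2⟩
    have hrev : ∀ x y, RavRel E α x y → RavRel E α y x :=
      fun _ _ h => ⟨S.symm _ _ h.1, h.2.2, h.2.1⟩
    have hcreach : ∀ {s t : A}, ReflTransGen (RavRel E α) β s →
        ReflTransGen (RavRel E α) β t → ReflTransGen (RavRel E α) s t :=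
      fun hs ht => (rtgRev hrev hs).trans ht
    have claim1 : ∀ t, ReflTransGen (RavRel E α) β t → ∀ s, ReflTransGen (RavRel E α) β s →
        g t s ≠ α := by
      intro t ht s hs hgts
      have hd := roamTwo S (hcreach hs ht) hgts
      rw [S.diag t] at hd
      exact (hCsub t ht).2 hd
    have claim2a : ∀ t, ReflTransGen (RavRel E α) β t → ∀ w, ReflTransGen (RavRel E α) β w →
        E α w → g t w = w := by
      intro t ht w hw hEw
      rcases eq_or_ne (g t w) (g t α) with he | hne
      · exact absurd (he.trans (hrc t (hCsub t ht).1).1) (claim1 t ht w hw)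
      · exact (S.core2 w α t (S.symm α w hEw) hne).1
    have claim2b : ∀ t, ReflTransGen (RavRel E α) β t → ∀ w, ReflTransGen (RavRel E α) β w →
        E α w → g w t = w := by
      intro t ht w hw hEw
      rcases eq_or_ne (g w t) (g α t) with he | hne
      · exact absurd (he.trans (hrc t (hCsub t ht).1).2) (claim1 w hw t ht)
      · exact (S.core1 w α t (S.symm α w hEw) hne).1
    by_cases hex : ∃ w, ReflTransGen (RavRel E α) β w ∧ E α w ∧ w ≠ β
    · obtain ⟨w, hwC, hEw, hwβ⟩ := hex
      have h1 : g w β = β := claim2a w hwC β hβC hEαβ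
      have h2 : g w β = w := claim2b β hβC w hwC hEw
      exact hwβ (h2.symm.trans h1)
    · push_neg at hex
      obtain ⟨z₁, z₂, hz₁, hz₂, hzz⟩ := S.deg2 β
      obtain ⟨z, hEz, hzα⟩ : ∃ z, E β z ∧ z ≠ α := by
        rcases eq_or_ne z₁ α with h | h
        · refine ⟨z₂, hz₂, ?_⟩
          rw [← h]
          exact hzz.symm
        · exact ⟨z₁, hz₁, h⟩
      have hzC : ReflTransGen (RavRel E α) β z :=
        Relation.ReflTransGen.single ⟨hEz, hβα, hzα⟩
      have hzβ : z ≠ β := fun h => S.irr β (by rw [h] at hEz; exact hEz)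
      set H' : Finset A := Finset.univ.filter (fun y => ReflTransGen (RavRel E α) β y) with hH'
      have hmem' : ∀ y, y ∈ H' ↔ ReflTransGen (RavRel E α) β y := by
        intro y; simp [hH']
      have hsub : H' ⊆ H := fun y hy => (hCsub y ((hmem' y).mp hy)).1
      have hαH' : α ∉ H' := fun h => (hCsub α ((hmem' α).mp h)).2 rfl
      have hcard' : H'.card ≤ n := by
        have hlt : H'.card < H.card :=
          Finset.card_lt_card ((Finset.ssubset_iff_of_subset hsub).mpr ⟨α, hα, hαH'⟩)
        omega
      refine ih H' hcard' β z ((hmem' β).mpr hβC) ((hmem' z).mpr hzC) hzβ hEz ?_ ?_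
      · intro t htH' htβ z' hEtz'
        have htC := (hmem' t).mp htH'
        rcases eq_or_ne z' α with rfl | hz'α
        · exact absurd (hex t htC (S.symm _ _ hEtz')) htβ
        · exact (hmem' z').mpr (htC.tail ⟨hEtz', (hCsub t htC).2, hz'α⟩)
      · intro t htH'
        have htC := (hmem' t).mp htH'
        exact ⟨claim2a t htC β hβC hEαβ, claim2b t htC β hβC hEαβ⟩

theorem absMain (S : GSetup E g) (hconn : ∀ x y : A, ReflTransGen E x y)
    {a b : A} (hab : E a b) (hgab : g a b = a) : ∀ y, g a y = a := by
  classical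
  have hba : b ≠ a := fun h => S.irr a (by rw [h] at hab; exact hab)
  have claimB : ∀ u, E a u → g a u = a := by
    intro u hEu
    by_contra hgu
    have hgu' : g a u = u := by
      rcases eq_or_ne (g a a) (g a u) with he | hne
      · exact absurd (he.symm.trans (S.diag a)) hgu
      · exact (S.core2 a u a hEu hne).2
    have hua : u ≠ a := fun h => hgu (by rw [hgu', h])
    have fact1 : ∀ y, ReflTransGen (RavRel E a) b y → g a y = a :=
      fun y hy => roamTwo S hy hgab
    have huB : ¬ ReflTransGen (RavRel E a) b u := fun h => hgu (fact1 u h)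
    have pathB : ∀ t, ReflTransGen (RavRel E a) b t → ReflTransGen (RavRel E u) b t := by
      intro t ht
      induction ht with
      | refl => exact .refl
      | @tail p q h1 hstep ihp =>
        refine ihp.tail ⟨hstep.1, ?_, ?_⟩
        · exact fun h => huB (h ▸ h1)
        · exact fun h => huB (h ▸ (h1.tail hstep))
    have pathA : ∀ t, ReflTransGen (RavRel E a) b t → ReflTransGen (RavRel E u) a t := by
      intro t ht
      refine Relation.ReflTransGen.head ⟨hab, Ne.symm hua, ?_⟩ (pathB t ht)
      exact fun h => huB (h ▸ (Relation.ReflTransGen.refl))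
    have fact3 : ∀ t, ReflTransGen (RavRel E a) b t → g t u = u :=
      fun t ht => roamOne S (pathA t ht) hgu'
    have fact4 : ∀ t, (ReflTransGen (RavRel E a) b t ∨ t = a) → g t a = a := by
      intro t htB
      by_contra hne4
      have hgta : g t a = u := by
        rcases eq_or_ne (g t a) (g t u) with he | hne
        · rcases htB with h | h
          · exact he.trans (fact3 t h)
          · rw [h]; rw [h] at he; exact he.trans hgu'
        · exact absurd (S.core2 a u t hEu hne).1 hne4
      have hpath : ReflTransGen (RavRel E u) a t := by
        rcases htB with h | h
        · exact pathA t h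
        · rw [h]
      have hd := roamTwo S hpath hgta
      rw [S.diag t] at hd
      rcases htB with h | h
      · exact huB (hd ▸ h)
      · exact hua (by rw [← hd, h])
    classical
    set H : Finset A := Finset.univ.filter
      (fun y => ReflTransGen (RavRel E a) b y ∨ y = a) with hH
    have hmemH : ∀ y, y ∈ H ↔ (ReflTransGen (RavRel E a) b y ∨ y = a) := by
      intro y; simp [hH]
    refine lemZ S H.card H le_rfl a b ((hmemH a).mpr (Or.inr rfl))
      ((hmemH b).mpr (Or.inl .refl)) hba hab ?_ ?_
    · intro t htH htα z hEtz
      have htB : ReflTransGen (RavRel E a) b t := ((hmemH t).mp htH).resolve_right htα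
      rcases eq_or_ne z a with rfl | hza
      · exact (hmemH _).mpr (Or.inr rfl)
      · exact (hmemH z).mpr (Or.inl (htB.tail ⟨hEtz, htα, hza⟩))
    · intro t htH
      rcases (hmemH t).mp htH with h | h
      · exact ⟨fact4 t (Or.inl h), fact1 t h⟩
      · rw [h]; exact ⟨S.diag a, S.diag a⟩
  intro y
  have hreach := hconn a y
  induction hreach with
  | refl => exact S.diag a
  | @tail p q _ hstep ih =>
    rcases eq_or_ne p a with rfl | hpa
    · exact claimB q hstep
    · rcases eq_or_ne (g a p) (g a q) with he | hne
      · rw [← he]; exact ih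
      · exact absurd ((S.core2 p q a hstep hne).1.symm.trans ih) hpa

end AuxAbstract

/-- Lemma 3: for every edge `(a,b)` of `G(D)`, either voter 1 is decisive over
`a` or voter 2 is decisive over `b`. -/
theorem stmt11 {A : Type*} [Fintype A] [Nonempty A] (hA : 3 ≤ Fintype.card A)
    (D : Set (Pref A)) (hmr : MinimallyRich D) (hcdn : CDN D)
    (f : (Fin 2 → D) → A)
    (hu : Unanimous D f) (hto : TopsOnly D f) (hlsp : LocallySP D f)
    (a b : A) (hab : EdgeD D a b) :
    Decisive D f 0 a ∨ Decisive D f 1 b := by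
  classical
  set rep : A → D := fun x => ⟨(hmr x).choose, (hmr x).choose_spec.1⟩ with hrepdef
  have rep_top : ∀ x, Pref.top ((rep x : D) : Pref A) = x := fun x => (hmr x).choose_spec.2
  set g : A → A → A := fun x y => f ![rep x, rep y] with hgdef
  have f_eq : ∀ P : Fin 2 → D,
      f P = g (Pref.top ((P 0 : D) : Pref A)) (Pref.top ((P 1 : D) : Pref A)) := by
    intro P
    apply hto
    intro i
    fin_cases i <;> simp [rep_top]
  have upd1 : ∀ (X Y Z : D), Function.update (![X, Y] : Fin 2 → D) 1 Z = ![X, Z] := by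
    intro X Y Z
    funext i
    fin_cases i <;> simp [Function.update]
  have upd0 : ∀ (X Y Z : D), Function.update (![X, Y] : Fin 2 → D) 0 Z = ![Z, Y] := by
    intro X Y Z
    funext i
    fin_cases i <;> simp [Function.update]
  have hcore2 : ∀ t u x, EdgeD D t u → g x t ≠ g x u → g x t = t ∧ g x u = u := by
    intro t u x he hne
    obtain ⟨P, hP, P', hP', hadj, htP, htP', hr1, hr1'⟩ := he
    obtain ⟨h0, h0', hoff⟩ := edgeData hadj htP htP' hr1 hr1'
    set p1 : Fin 2 → D := ![rep x, ⟨P, hP⟩] with hp1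
    set p2 : Fin 2 → D := ![rep x, ⟨P', hP'⟩] with hp2
    have hP1 : ((p1 1 : D) : Pref A) = P := by simp [hp1]
    have hP2 : ((p2 1 : D) : Pref A) = P' := by simp [hp2]
    have e1 : f p1 = g x t := by
      rw [f_eq p1]
      have ha : Pref.top ((p1 0 : D) : Pref A) = x := by simp [hp1, rep_top]
      have hb : Pref.top ((p1 1 : D) : Pref A) = t := by rw [hP1]; exact htP
      rw [ha, hb]
    have e2 : f p2 = g x u := by
      rw [f_eq p2]
      have ha : Pref.top ((p2 0 : D) : Pref A) = x := by simp [hp2, rep_top]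
      have hb : Pref.top ((p2 1 : D) : Pref A) = u := by rw [hP2]; exact htP'
      rw [ha, hb]
    have hu1 : Function.update p1 1 (⟨P', hP'⟩ : D) = p2 := by
      rw [hp1, hp2]; exact upd1 _ _ _
    have hu2 : Function.update p2 1 (⟨P, hP⟩ : D) = p1 := by
      rw [hp1, hp2]; exact upd1 _ _ _
    have l1 := hlsp p1 1 ⟨P', hP'⟩ (by rw [hP1]; exact hadj)
    rw [hu1, hP1] at l1
    have l2 := hlsp p2 1 ⟨P, hP⟩ (by rw [hP2]; exact adjSymm hadj)
    rw [hu2, hP2] at l2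
    have i1 : rk P (f p1) ≤ rk P (f p2) := Nat.le_of_not_lt l1
    have i2 : rk P' (f p2) ≤ rk P' (f p1) := Nat.le_of_not_lt l2
    have hne' : f p1 ≠ f p2 := by rw [e1, e2]; exact hne
    obtain ⟨H1, H2⟩ := rankCore h0 hr1 h0' hr1' hoff i1 i2 hne'
    exact ⟨by rw [← e1, H1], by rw [← e2, H2]⟩
  have hcore1 : ∀ t u y, EdgeD D t u → g t y ≠ g u y → g t y = t ∧ g u y = u := by
    intro t u y he hne
    obtain ⟨P, hP, P', hP', hadj, htP, htP', hr1, hr1'⟩ := he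
    obtain ⟨h0, h0', hoff⟩ := edgeData hadj htP htP' hr1 hr1'
    set p1 : Fin 2 → D := ![⟨P, hP⟩, rep y] with hp1
    set p2 : Fin 2 → D := ![⟨P', hP'⟩, rep y] with hp2
    have hP1 : ((p1 0 : D) : Pref A) = P := by simp [hp1]
    have hP2 : ((p2 0 : D) : Pref A) = P' := by simp [hp2]
    have e1 : f p1 = g t y := by
      rw [f_eq p1]
      have ha : Pref.top ((p1 0 : D) : Pref A) = t := by rw [hP1]; exact htP
      have hb : Pref.top ((p1 1 : D) : Pref A) = y := by simp [hp1, rep_top]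
      rw [ha, hb]
    have e2 : f p2 = g u y := by
      rw [f_eq p2]
      have ha : Pref.top ((p2 0 : D) : Pref A) = u := by rw [hP2]; exact htP'
      have hb : Pref.top ((p2 1 : D) : Pref A) = y := by simp [hp2, rep_top]
      rw [ha, hb]
    have hu1 : Function.update p1 0 (⟨P', hP'⟩ : D) = p2 := by
      rw [hp1, hp2]; exact upd0 _ _ _
    have hu2 : Function.update p2 0 (⟨P, hP⟩ : D) = p1 := by
      rw [hp1, hp2]; exact upd0 _ _ _
    have l1 := hlsp p1 0 ⟨P', hP'⟩ (by rw [hP1]; exact hadj)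
    rw [hu1, hP1] at l1
    have l2 := hlsp p2 0 ⟨P, hP⟩ (by rw [hP2]; exact adjSymm hadj)
    rw [hu2, hP2] at l2
    have i1 : rk P (f p1) ≤ rk P (f p2) := Nat.le_of_not_lt l1
    have i2 : rk P' (f p2) ≤ rk P' (f p1) := Nat.le_of_not_lt l2
    have hne' : f p1 ≠ f p2 := by rw [e1, e2]; exact hne
    obtain ⟨H1, H2⟩ := rankCore h0 hr1 h0' hr1' hoff i1 i2 hne'
    exact ⟨by rw [← e1, H1], by rw [← e2, H2]⟩
  have hdiag : ∀ x, g x x = x := by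
    intro x
    show f ![rep x, rep x] = x
    apply hu
    intro i
    fin_cases i <;> simp [rep_top]
  have S : GSetup (EdgeD D) g :=
    { symm := fun _ _ h => edgeSymm h
      irr := fun _ h => edgeIrrefl h
      deg2 := fun t => minDeg2 hmr hcdn t
      diag := hdiag
      core1 := hcore1
      core2 := hcore2 }
  have hconn : ∀ x y : A, ReflTransGen (EdgeD D) x y := edgeConn hmr hcdn.1
  have hseed : g a b = a ∨ g a b = b := by
    have hEba : EdgeD D b a := edgeSymm hab
    rcases eq_or_ne (g b b) (g a b) with he | hne
    · right; rw [← he, hdiag]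
    · left; exact (hcore1 b a b hEba hne).2
  rcases hseed with h | h
  · left
    intro P htop
    rw [f_eq P, htop]
    exact absMain S hconn hab h _
  · right
    intro P htop
    rw [f_eq P, htop]
    have S' : GSetup (EdgeD D) (fun x y => g y x) :=
      { symm := S.symm
        irr := S.irr
        deg2 := S.deg2
        diag := S.diag
        core1 := fun t u y he hne => hcore2 t u y he hne
        core2 := fun t u x he hne => hcore1 t u x he hne }
    exact absMain S' hconn (edgeSymm hab) h _
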